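/- arXiv:1204.4763 — 2 statements merged into one kernel-verified Lean document; each statement's English description precedes it below -/
import Mathlib

section
/- Let a, b ⊆ {1,…,d} and let x, z, w be independent random vectors, each uniformly distributed on [0,1]^d. Then E[ f(x_a : z_{-a}) · f(x_b : w_{-b}) ] = μ² + τ̲²_{a∩b}. That is, the expected product of f evaluated at two random points that share exactly the coordinates in a∩b equals μ² plus the lower Sobol' index of the shared coordinate set. -/
open MeasureTheory Finset

/-- The uniform (Lebesgue) probability measure on the interval `[0,1]`. -/
noncomputable def unifSeg : Measure ℝ := (volume : Measure ℝ).restrict (Set.Icc 0 1)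

/-- The uniform (Lebesgue) product probability measure on the cube `[0,1]^d`. -/
noncomputable def unifCube (d : ℕ) : Measure (Fin d → ℝ) :=
  Measure.pi fun _ => unifSeg

/-- `glue u x y` is the point whose `j`-th coordinate is `x j` for `j ∈ u`
and `y j` otherwise, i.e. `(x_u : y_{-u})`. -/
def glue {d : ℕ} (u : Finset (Fin d)) (x y : Fin d → ℝ) : Fin d → ℝ :=
  fun j => if j ∈ u then x j else y j

/-- The lower Sobol' index `τ̲²_u` of the set `u`. -/
noncomputable def lowerSobol {d : ℕ} (f : (Fin d → ℝ) → ℝ) (u : Finset (Fin d)) : ℝ :=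
  (∫ x, (∫ y, f (glue u x y) ∂(unifCube d)) ^ 2 ∂(unifCube d))
    - (∫ x, f x ∂(unifCube d)) ^ 2

/-- The variance `σ²` of `f` over the unit cube. -/
noncomputable def sigmaSq {d : ℕ} (f : (Fin d → ℝ) → ℝ) : ℝ :=
  (∫ x, f x ^ 2 ∂(unifCube d)) - (∫ x, f x ∂(unifCube d)) ^ 2

/-- The upper Sobol' index `τ̄²_u = σ² - τ̲²_{uᶜ}` of the set `u`. -/
noncomputable def upperSobol {d : ℕ} (f : (Fin d → ℝ) → ℝ) (u : Finset (Fin d)) : ℝ :=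
  sigmaSq f - lowerSobol f uᶜ

/-! In the triple integral, a coordinate of `x` outside `s = a ∩ b` feeds only one of the two
factors. Exchanging the coordinates in `a \ b` between `x` and `z` is measure preserving and
turns the integrand into `f (x_s : z_{-s}) * f (x_b : w_{-b})`; by symmetry the same is done
with `b \ a` and `w`. Once both factors glue along `s`, integrating out `z` and `w`
separately gives `(∫ f (x_s : y_{-s}) dy)²`. -/

instance isProbabilityMeasure_unifSeg : IsProbabilityMeasure unifSeg :=
  ⟨by simp [unifSeg, Real.volume_Icc]⟩

instance isProbabilityMeasure_unifCube (d : ℕ) : IsProbabilityMeasure (unifCube d) := by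
  unfold unifCube; infer_instance

theorem MeasureTheory.MeasurePreserving.integral_comp_of_aestronglyMeasurable
    {α β : Type*} [MeasurableSpace α] [MeasurableSpace β] {μ : Measure α} {ν : Measure β}
    {φ : α → β} (hφ : MeasurePreserving φ μ ν) {g : β → ℝ} (hg : AEStronglyMeasurable g ν) :
    ∫ x, g (φ x) ∂μ = ∫ y, g y ∂ν := by
  rw [← hφ.map_eq] at hg ⊢
  exact (integral_map hφ.aemeasurable hg).symm

theorem measurePreserving_prod_pi_coordinatewise {ι α β γ δ : Type*} [Fintype ι]
    [MeasurableSpace α] [MeasurableSpace β] [MeasurableSpace γ] [MeasurableSpace δ]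
    {μ : ι → Measure α} {ν : ι → Measure β} {ρ : ι → Measure γ} {σ : ι → Measure δ}
    [∀ i, SigmaFinite (μ i)] [∀ i, SigmaFinite (ν i)] [∀ i, SigmaFinite (ρ i)]
    [∀ i, SigmaFinite (σ i)] {φ : ι → α × β → γ × δ}
    (hφ : ∀ i, MeasurePreserving (φ i) ((μ i).prod (ν i)) ((ρ i).prod (σ i))) :
    MeasurePreserving
      (fun p : (ι → α) × (ι → β) =>
        (fun i => (φ i (p.1 i, p.2 i)).1, fun i => (φ i (p.1 i, p.2 i)).2))
      ((Measure.pi μ).prod (Measure.pi ν)) ((Measure.pi ρ).prod (Measure.pi σ)) :=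
  (measurePreserving_arrowProdEquivProdArrow γ δ ι ρ σ).comp
    ((measurePreserving_pi _ _ hφ).comp
      ((measurePreserving_arrowProdEquivProdArrow α β ι μ ν).symm _))

def swapOn {d : ℕ} (v : Finset (Fin d)) (p : (Fin d → ℝ) × (Fin d → ℝ)) :
    (Fin d → ℝ) × (Fin d → ℝ) :=
  (glue v p.2 p.1, glue v p.1 p.2)

theorem measurePreserving_swapOn {d : ℕ} (v : Finset (Fin d)) :
    MeasurePreserving (swapOn v) ((unifCube d).prod (unifCube d))
      ((unifCube d).prod (unifCube d)) := by
  unfold unifCube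
  have hφ (i : Fin d) : MeasurePreserving (if i ∈ v then Prod.swap else id)
      (unifSeg.prod unifSeg) (unifSeg.prod unifSeg) := by
    split_ifs
    exacts [Measure.measurePreserving_swap, MeasurePreserving.id _]
  convert measurePreserving_prod_pi_coordinatewise hφ using 1
  ext p i <;> by_cases hi : i ∈ v <;> simp [swapOn, glue, hi]

theorem measurePreserving_glue {d : ℕ} (u : Finset (Fin d)) :
    MeasurePreserving (fun p : (Fin d → ℝ) × (Fin d → ℝ) => glue u p.1 p.2)
      ((unifCube d).prod (unifCube d)) (unifCube d) := by
  convert measurePreserving_fst.comp (measurePreserving_swapOn uᶜ) using 1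
  ext p i
  by_cases hi : i ∈ u <;> simp [swapOn, glue, hi]

def pickFreezeProduct {d : ℕ} (f : (Fin d → ℝ) → ℝ) (a b : Finset (Fin d))
    (ω : (Fin d → ℝ) × (Fin d → ℝ) × (Fin d → ℝ)) : ℝ :=
  f (glue a ω.1 ω.2.1) * f (glue b ω.1 ω.2.2)

section PickFreeze

variable {d : ℕ} {f : (Fin d → ℝ) → ℝ}

theorem integrable_pickFreezeProduct (hf : MemLp f 2 (unifCube d)) (a b : Finset (Fin d)) :
    Integrable (pickFreezeProduct f a b)
      ((unifCube d).prod ((unifCube d).prod (unifCube d))) := by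
  have hx (u : Finset (Fin d)) := hf.comp_measurePreserving (measurePreserving_glue u)
  have hz := (hx a).comp_measurePreserving
    ((MeasurePreserving.id (unifCube d)).prod (measurePreserving_fst (ν := unifCube d)))
  have hw := (hx b).comp_measurePreserving
    ((MeasurePreserving.id (unifCube d)).prod (measurePreserving_snd (μ := unifCube d)))
  exact memLp_one_iff_integrable.mp (hw.smul hz)

theorem integral_iterated_eq_integral_pickFreezeProduct (hf : MemLp f 2 (unifCube d))
    (a b : Finset (Fin d)) :
    (∫ x, ∫ z, ∫ w, f (glue a x z) * f (glue b x w)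
        ∂(unifCube d) ∂(unifCube d) ∂(unifCube d))
      = ∫ ω, pickFreezeProduct f a b ω ∂(unifCube d).prod ((unifCube d).prod (unifCube d)) := by
  have hint := integrable_pickFreezeProduct hf a b
  rw [integral_prod _ hint]
  refine integral_congr_ae ?_
  filter_upwards [hint.prod_right_ae] with x hx
  exact (integral_prod _ hx).symm

theorem integral_pickFreezeProduct_comm (hf : MemLp f 2 (unifCube d)) (a b : Finset (Fin d)) :
    ∫ ω, pickFreezeProduct f a b ω ∂(unifCube d).prod ((unifCube d).prod (unifCube d))
      = ∫ ω, pickFreezeProduct f b a ω ∂(unifCube d).prod ((unifCube d).prod (unifCube d)) := by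
  have hswap := (MeasurePreserving.id (unifCube d)).prod
    (Measure.measurePreserving_swap (μ := unifCube d) (ν := unifCube d))
  rw [← hswap.integral_comp_of_aestronglyMeasurable
    (integrable_pickFreezeProduct hf b a).aestronglyMeasurable]
  simp only [pickFreezeProduct, Prod.map, id, Prod.fst_swap, Prod.snd_swap, mul_comm]

theorem integral_pickFreezeProduct_inter_left (hf : MemLp f 2 (unifCube d))
    (a b : Finset (Fin d)) :
    ∫ ω, pickFreezeProduct f a b ω ∂(unifCube d).prod ((unifCube d).prod (unifCube d))
      = ∫ ω, pickFreezeProduct f (a ∩ b) b ω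
          ∂(unifCube d).prod ((unifCube d).prod (unifCube d)) := by
  set ν := unifCube d
  have hψ := (measurePreserving_prodAssoc ν ν ν).comp
    (((measurePreserving_swapOn (a \ b)).prod (MeasurePreserving.id ν)).comp
      ((measurePreserving_prodAssoc ν ν ν).symm MeasurableEquiv.prodAssoc))
  rw [← hψ.integral_comp_of_aestronglyMeasurable
    (integrable_pickFreezeProduct hf (a ∩ b) b).aestronglyMeasurable]
  congr 1
  ext ⟨x, z, w⟩
  have h₁ : glue (a ∩ b) (glue (a \ b) z x) (glue (a \ b) x z) = glue a x z := by
    ext j; by_cases ha : j ∈ a <;> by_cases hb : j ∈ b <;> simp [glue, ha, hb]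
  have h₂ : glue b (glue (a \ b) z x) w = glue b x w := by
    ext j; by_cases hb : j ∈ b <;> simp [glue, hb]
  simp [pickFreezeProduct, swapOn, MeasurableEquiv.prodAssoc, h₁, h₂]

theorem integral_pickFreezeProduct_eq_inter (hf : MemLp f 2 (unifCube d))
    (a b : Finset (Fin d)) :
    ∫ ω, pickFreezeProduct f a b ω ∂(unifCube d).prod ((unifCube d).prod (unifCube d))
      = ∫ ω, pickFreezeProduct f (a ∩ b) (a ∩ b) ω
          ∂(unifCube d).prod ((unifCube d).prod (unifCube d)) := by
  have hinter : b ∩ (a ∩ b) = a ∩ b := inter_eq_right.mpr inter_subset_right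
  rw [integral_pickFreezeProduct_inter_left hf, integral_pickFreezeProduct_comm hf,
    integral_pickFreezeProduct_inter_left hf, hinter]

theorem integral_iterated_glue_self (u : Finset (Fin d)) :
    (∫ x, ∫ z, ∫ w, f (glue u x z) * f (glue u x w)
        ∂(unifCube d) ∂(unifCube d) ∂(unifCube d))
      = ∫ x, (∫ y, f (glue u x y) ∂(unifCube d)) ^ 2 ∂(unifCube d) := by
  simp only [integral_const_mul, integral_mul_const, sq]

end PickFreeze

theorem stmt9_general {d : ℕ} (f : (Fin d → ℝ) → ℝ)
    (hf : MemLp f 2 (unifCube d)) (a b : Finset (Fin d)) :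
    (∫ x, ∫ z, ∫ w, f (glue a x z) * f (glue b x w)
        ∂(unifCube d) ∂(unifCube d) ∂(unifCube d))
      = (∫ x, f x ∂(unifCube d)) ^ 2 + lowerSobol f (a ∩ b) := by
  rw [integral_iterated_eq_integral_pickFreezeProduct hf, integral_pickFreezeProduct_eq_inter hf,
    ← integral_iterated_eq_integral_pickFreezeProduct hf, integral_iterated_glue_self, lowerSobol]
  ring

theorem stmt9 {d : ℕ} (hd : 1 ≤ d) (f : (Fin d → ℝ) → ℝ)
    (hf : MemLp f 2 (unifCube d)) (a b : Finset (Fin d)) :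
    (∫ x, ∫ z, ∫ w, f (glue a x z) * f (glue b x w)
        ∂(unifCube d) ∂(unifCube d) ∂(unifCube d))
      = (∫ x, f x ∂(unifCube d)) ^ 2 + lowerSobol f (a ∩ b) :=
  stmt9_general f hf a b
end

section
/- Let g_1,…,g_d : [0,1] → ℝ be square-integrable with ∫_0^1 g_j(t) dt = 0 and ∫_0^1 g_j(t)² dt = 1 for each j, let μ_1,…,μ_d, τ_1,…,τ_d ∈ ℝ, and let f(x) = ∏_{j=1}^d (μ_j + τ_j g_j(x_j)). Then for every u ⊆ {1,…,d}, the lower Sobol' index of u equals τ̲²_u = ∏_{j∈u} (μ_j² + τ_j²) · ∏_{j∉u} μ_j² − ∏_{j=1}^d μ_j². -/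
open MeasureTheory Finset

/-
Since the coordinates of the cube are independent, every integral of a product `∏ j, h j (x j)`
factorises. Gluing keeps the `u`-coordinates of `x`, so integrating out `y` leaves
`(∏ j ∈ u, h j (x j)) * ∏ j ∉ u, E h_j`, whose mean square factorises again into
`∏ j ∈ u, E h_j² · ∏ j ∉ u, (E h_j)²`. For `h_j = μ_j + τ_j g_j` with `g_j` standardised,
`E h_j = μ_j` and `E h_j² = μ_j² + τ_j²`.
-/

instance : IsProbabilityMeasure unifSeg := by
  constructor
  rw [unifSeg, Measure.restrict_apply_univ, Real.volume_Icc]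
  norm_num

theorem integral_pi_prod_finset {ι : Type*} [Fintype ι] [DecidableEq ι] {E : ι → Type*}
    {mE : ∀ i, MeasurableSpace (E i)} {μ : ∀ i, Measure (E i)} [∀ i, IsProbabilityMeasure (μ i)]
    (s : Finset ι) (f : ∀ i, E i → ℝ) :
    ∫ x, ∏ i ∈ s, f i (x i) ∂Measure.pi μ = ∏ i ∈ s, ∫ t, f i t ∂μ i := by
  have integral_ite (i : ι) : ∫ t, (if i ∈ s then f i t else 1) ∂μ i
      = if i ∈ s then ∫ t, f i t ∂μ i else 1 := by
    split_ifs <;> simp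
  simpa only [integral_ite, prod_ite_mem, univ_inter] using
    integral_fintype_prod_eq_prod (μ := μ) fun i t => if i ∈ s then f i t else 1

section AffineMoments

variable {α : Type*} [MeasurableSpace α] {μ : Measure α} [IsProbabilityMeasure μ] {g : α → ℝ}

theorem integral_add_mul_of_integral_eq_zero (hg : Integrable g μ) (hg0 : ∫ t, g t ∂μ = 0)
    (a b : ℝ) : ∫ t, (a + b * g t) ∂μ = a := by
  rw [integral_add (integrable_const a) (hg.const_mul b), integral_const_mul, hg0]
  simp

theorem integral_add_mul_sq_of_moments (hg : MemLp g 2 μ) (hg0 : ∫ t, g t ∂μ = 0)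
    (hg1 : ∫ t, g t ^ 2 ∂μ = 1) (a b : ℝ) : ∫ t, (a + b * g t) ^ 2 ∂μ = a ^ 2 + b ^ 2 := by
  have hg_int : Integrable g μ := hg.integrable one_le_two
  have expand : (fun t => (a + b * g t) ^ 2)
      = fun t => a ^ 2 + (2 * a * b * g t + b ^ 2 * g t ^ 2) := by
    funext t; ring
  have h_lin : Integrable (fun t => 2 * a * b * g t + b ^ 2 * g t ^ 2) μ :=
    (hg_int.const_mul _).add (hg.integrable_sq.const_mul _)
  rw [expand, integral_add (integrable_const _) h_lin,
    integral_add (hg_int.const_mul _) (hg.integrable_sq.const_mul _),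
    integral_const_mul, integral_const_mul, hg0, hg1]
  simp

end AffineMoments

theorem prod_glue {d : ℕ} (h : Fin d → ℝ → ℝ) (u : Finset (Fin d)) (x y : Fin d → ℝ) :
    ∏ j, h j (glue u x y j) = (∏ j ∈ u, h j (x j)) * ∏ j ∈ uᶜ, h j (y j) := by
  rw [← prod_mul_prod_compl u]
  congr 1 <;> refine prod_congr rfl fun j hj => ?_ <;> simp_all [glue]

theorem lowerSobol_prod {d : ℕ} (h : Fin d → ℝ → ℝ) (u : Finset (Fin d)) :
    lowerSobol (fun x => ∏ j, h j (x j)) u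
      = (∏ j ∈ u, ∫ t, h j t ^ 2 ∂unifSeg) * (∏ j ∈ uᶜ, (∫ t, h j t ∂unifSeg) ^ 2)
        - ∏ j, (∫ t, h j t ∂unifSeg) ^ 2 := by
  have inner (x : Fin d → ℝ) : ∫ y, ∏ j, h j (glue u x y j) ∂unifCube d
      = (∏ j ∈ u, h j (x j)) * ∏ j ∈ uᶜ, ∫ t, h j t ∂unifSeg := by
    simp_rw [prod_glue, integral_const_mul]
    rw [unifCube, integral_pi_prod_finset]
  have mean_square : ∫ x, ((∏ j ∈ u, h j (x j)) * ∏ j ∈ uᶜ, ∫ t, h j t ∂unifSeg) ^ 2 ∂unifCube d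
      = (∏ j ∈ u, ∫ t, h j t ^ 2 ∂unifSeg) * ∏ j ∈ uᶜ, (∫ t, h j t ∂unifSeg) ^ 2 := by
    simp_rw [mul_pow, ← prod_pow, integral_mul_const]
    rw [unifCube, integral_pi_prod_finset u fun j t => h j t ^ 2]
  have mean : ∫ x, ∏ j, h j (x j) ∂unifCube d = ∏ j, ∫ t, h j t ∂unifSeg :=
    integral_fintype_prod_eq_prod h
  rw [lowerSobol]
  simp_rw [inner, mean_square, mean, prod_pow]

theorem stmt14_general {d : ℕ} (g : Fin d → ℝ → ℝ)
    (hg : ∀ j, MemLp (g j) 2 unifSeg)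
    (hg0 : ∀ j, ∫ t, g j t ∂unifSeg = 0)
    (hg1 : ∀ j, ∫ t, g j t ^ 2 ∂unifSeg = 1)
    (μ τ : Fin d → ℝ) (u : Finset (Fin d)) :
    lowerSobol (fun x => ∏ j, (μ j + τ j * g j (x j))) u
      = (∏ j ∈ u, (μ j ^ 2 + τ j ^ 2)) * (∏ j ∈ uᶜ, μ j ^ 2) - ∏ j, μ j ^ 2 := by
  have mean (j : Fin d) : ∫ t, (μ j + τ j * g j t) ∂unifSeg = μ j :=
    integral_add_mul_of_integral_eq_zero ((hg j).integrable one_le_two) (hg0 j) _ _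
  have mean_square (j : Fin d) : ∫ t, (μ j + τ j * g j t) ^ 2 ∂unifSeg = μ j ^ 2 + τ j ^ 2 :=
    integral_add_mul_sq_of_moments (hg j) (hg0 j) (hg1 j) _ _
  rw [lowerSobol_prod fun j t => μ j + τ j * g j t]
  simp only [mean, mean_square]

theorem stmt14 {d : ℕ} (hd : 1 ≤ d) (g : Fin d → ℝ → ℝ)
    (hg : ∀ j, MemLp (g j) 2 unifSeg)
    (hg0 : ∀ j, ∫ t, g j t ∂unifSeg = 0)
    (hg1 : ∀ j, ∫ t, g j t ^ 2 ∂unifSeg = 1)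
    (μ τ : Fin d → ℝ) (u : Finset (Fin d)) :
    lowerSobol (fun x => ∏ j, (μ j + τ j * g j (x j))) u
      = (∏ j ∈ u, (μ j ^ 2 + τ j ^ 2)) * (∏ j ∈ uᶜ, μ j ^ 2) - ∏ j, μ j ^ 2 :=
  stmt14_general g hg hg0 hg1 μ τ u
end
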